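/- Let R be an associative ring, G a groupoid, and α = (D_g, α_g)_{g∈G} a partial action of G on R such that D_g is s-unital for every g ∈ G and R = ⊕_{e∈G₀} D_e. Then: (i) if R ⋊_α G is prime, then R is G-prime; (ii) if α has the intersection property, then R is G-prime if, and only if, R ⋊_α G is prime; (iii) R is G-simple and α has the intersection property if, and only if, R ⋊_α G is simple. -/

import Mathlib

open scoped Classical

/-- A (discrete) groupoid, presented as its set of morphisms `G`, with source map `s`,
range map `r`, inversion `inv` and a partially defined multiplication `mul`.
The units (identity morphisms, i.e. the objects) are the elements `e` with `r e = e`. -/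
structure DGroupoid (G : Type*) where
  s : G → G
  r : G → G
  inv : G → G
  mul : (g h : G) → s g = r h → G
  s_inv : ∀ g, s (inv g) = r g
  r_inv : ∀ g, r (inv g) = s g
  inv_inv : ∀ g, inv (inv g) = g
  r_mul : ∀ g h (p : s g = r h), r (mul g h p) = r g
  s_mul : ∀ g h (p : s g = r h), s (mul g h p) = s h
  r_idem : ∀ g, r (r g) = r g
  s_of_r : ∀ g, s (r g) = r g
  r_of_s : ∀ g, r (s g) = s g
  s_idem : ∀ g, s (s g) = s g
  assoc : ∀ g h k (p : s g = r h) (q : s h = r k) (pq : s (mul g h p) = r k)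
      (qp : s g = r (mul h k q)), mul (mul g h p) k pq = mul g (mul h k q) qp
  id_mul : ∀ g (p : s (r g) = r g), mul (r g) g p = g
  mul_id : ∀ g (p : s g = r (s g)), mul g (s g) p = g
  mul_inv : ∀ g (p : s g = r (inv g)), mul g (inv g) p = r g
  inv_mul : ∀ g (p : s (inv g) = r g), mul (inv g) g p = s g

namespace DGroupoid

/-- `e` is a unit (an object, identified with its identity morphism) of the groupoid. -/
def unit {G : Type*} (𝔾 : DGroupoid G) (e : G) : Prop := 𝔾.r e = e

end DGroupoid

section RingDefs

variable {R : Type*} [NonUnitalRing R]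

/-- A subset of a (possibly non-unital) ring is a two-sided ideal. -/
def IsRingIdeal (J : Set R) : Prop :=
  (0 : R) ∈ J ∧ (∀ x ∈ J, ∀ y ∈ J, x + y ∈ J) ∧ (∀ x ∈ J, -x ∈ J) ∧
    ∀ x ∈ J, ∀ y : R, x * y ∈ J ∧ y * x ∈ J

/-- A subset of a ring, viewed as a ring, is s-unital: every `x` in it lies in
`xT ∩ Tx`. -/
def IsSUnitalSet (J : Set R) : Prop :=
  ∀ x ∈ J, (∃ u ∈ J, x * u = x) ∧ (∃ v ∈ J, v * x = x)

end RingDefs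

/-- A partial action `α = (D_g, α_g)_{g ∈ G}` of a groupoid `𝔾` on a
(possibly non-unital, associative) ring `R`:  each `D_{r g}` is a two-sided ideal of `R`,
each `D_g` is a two-sided ideal of `D_{r g}`, and `α_g = act g` restricts to a ring
isomorphism `D_{g⁻¹} → D_g` (the function `act g` is arbitrary outside `D_{g⁻¹}`),
satisfying the axioms of a partial action. -/
structure PartialAction {G : Type*} (𝔾 : DGroupoid G) (R : Type*) [NonUnitalRing R] where
  D : G → Set R
  zero_mem : ∀ g, (0 : R) ∈ D g
  add_mem : ∀ g, ∀ x ∈ D g, ∀ y ∈ D g, x + y ∈ D g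
  neg_mem : ∀ g, ∀ x ∈ D g, -x ∈ D g
  subset_r : ∀ g, D g ⊆ D (𝔾.r g)
  idealR : ∀ g, IsRingIdeal (D (𝔾.r g))
  idealInR : ∀ g, ∀ x ∈ D g, ∀ y ∈ D (𝔾.r g), x * y ∈ D g ∧ y * x ∈ D g
  act : G → R → R
  act_mem : ∀ g, ∀ x ∈ D (𝔾.inv g), act g x ∈ D g
  act_add : ∀ g, ∀ x ∈ D (𝔾.inv g), ∀ y ∈ D (𝔾.inv g), act g (x + y) = act g x + act g y
  act_mul : ∀ g, ∀ x ∈ D (𝔾.inv g), ∀ y ∈ D (𝔾.inv g), act g (x * y) = act g x * act g y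
  act_inv : ∀ g, ∀ x ∈ D (𝔾.inv g), act (𝔾.inv g) (act g x) = x
  act_unit : ∀ e, 𝔾.unit e → ∀ x ∈ D e, act e x = x
  act_comp_mem : ∀ g h (p : 𝔾.s g = 𝔾.r h), ∀ x, x ∈ D (𝔾.inv g) → x ∈ D h →
      act (𝔾.inv h) x ∈ D (𝔾.inv (𝔾.mul g h p))
  act_comp : ∀ g h (p : 𝔾.s g = 𝔾.r h), ∀ x ∈ D (𝔾.inv h), act h x ∈ D (𝔾.inv g) →
      act g (act h x) = act (𝔾.mul g h p) x

namespace PartialAction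

variable {G : Type*} {R : Type*} [NonUnitalRing R] {𝔾 : DGroupoid G} (P : PartialAction 𝔾 R)

/-- `R = ⊕_{e ∈ G₀} D_e`: every element of `R` decomposes as a finite sum of elements
of the `D_e` (`e` a unit), and the decomposition is unique (a finite sum of elements of
the distinct `D_e`'s which vanishes has all terms zero). -/
def directSum : Prop :=
  (∀ x : R, ∃ f : G →₀ R, (∀ g ∈ f.support, 𝔾.unit g) ∧ (∀ g, f g ∈ P.D g) ∧
      (f.sum fun _ v => v) = x) ∧
    ∀ f : G →₀ R, (∀ g ∈ f.support, 𝔾.unit g) → (∀ g, f g ∈ P.D g) →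
      (f.sum fun _ v => v) = 0 → f = 0

/-- The carrier of the partial skew groupoid ring `R ⋊_α G`: finitely supported
functions `a : G →₀ R` (thought of as `Σ_g a_g δ_g`) with `a g ∈ D g`. -/
def carrier : Set (G →₀ R) := {a | ∀ g, a g ∈ P.D g}

/-- The multiplication of the partial skew groupoid ring:
`(a_g δ_g)(b_h δ_h) = α_g(α_{g⁻¹}(a_g) b_h) δ_{gh}` when `(g,h)` is composable,
and `0` otherwise. -/
noncomputable def skewMul (a b : G →₀ R) : G →₀ R :=
  a.support.sum fun g => b.support.sum fun h =>
    if p : 𝔾.s g = 𝔾.r h then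
      Finsupp.single (𝔾.mul g h p) (P.act g (P.act (𝔾.inv g) (a g) * b h))
    else 0

/-- The subset `⊕_{e ∈ G₀} D_e δ_e` of `R ⋊_α G`: elements supported on units. -/
def diag : Set (G →₀ R) := {a | (∀ g, a g ∈ P.D g) ∧ ∀ g ∈ a.support, 𝔾.unit g}

/-- `I` is a two-sided ideal of the partial skew groupoid ring `R ⋊_α G`. -/
def IsSkewIdeal (I : Set (G →₀ R)) : Prop :=
  I ⊆ P.carrier ∧ (0 : G →₀ R) ∈ I ∧ (∀ x ∈ I, ∀ y ∈ I, x + y ∈ I) ∧ (∀ x ∈ I, -x ∈ I) ∧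
    ∀ x ∈ I, ∀ y ∈ P.carrier, P.skewMul x y ∈ I ∧ P.skewMul y x ∈ I

/-- The projection `P₀ : R ⋊_α G → R`, `Σ_g a_g δ_g ↦ Σ_{e ∈ G₀} a_e`. -/
noncomputable def P0 (_P : PartialAction 𝔾 R) (a : G →₀ R) : R :=
  a.sum fun g v => if 𝔾.unit g then v else 0

/-- An ideal `I` of `R ⋊_α G` is `G`-graded if it is generated by its homogeneous
components, i.e. `I = ⊕_g (I ∩ D_g δ_g)`. -/
def IsGradedIdeal (I : Set (G →₀ R)) : Prop :=
  P.IsSkewIdeal I ∧ ∀ a ∈ I, ∀ g : G, Finsupp.single g (a g) ∈ I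

/-- `J` is a `G`-invariant (two-sided) ideal of `R`: `α_g(D_{g⁻¹} ∩ J) ⊆ J`. -/
def IsInvIdeal (J : Set R) : Prop :=
  IsRingIdeal J ∧ ∀ g, ∀ x ∈ P.D (𝔾.inv g) ∩ J, P.act g x ∈ J

/-- The subset `J ⋊_{α^J} G = ⊕_g (J ∩ D_g) δ_g` of `R ⋊_α G` attached to a
`G`-invariant ideal `J` of `R`. -/
def skewOf (J : Set R) : Set (G →₀ R) := {a | ∀ g, a g ∈ P.D g ∩ J}

/-- `⊕_{e ∈ G₀} D_e δ_e` is a maximal commutative subring of `R ⋊_α G`: it is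
commutative and coincides with its centralizer. -/
def IsMaxCommDiag : Prop :=
  (∀ a ∈ P.diag, ∀ b ∈ P.diag, P.skewMul a b = P.skewMul b a) ∧
    ∀ b ∈ P.carrier, (∀ a ∈ P.diag, P.skewMul a b = P.skewMul b a) → b ∈ P.diag

/-- The partial action has the intersection property: every nonzero ideal of
`R ⋊_α G` intersects `⊕_{e ∈ G₀} D_e δ_e` nontrivially. -/
def HasIntersectionProperty : Prop :=
  ∀ I : Set (G →₀ R), P.IsSkewIdeal I → I ≠ {0} → I ∩ P.diag ≠ {0}

/-- `R` is `G`-simple: the only `G`-invariant ideals of `R` are `{0}` and `R`. -/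
def GSimple : Prop := ∀ J : Set R, P.IsInvIdeal J → J = {0} ∨ J = Set.univ

/-- `R` is `G`-prime: if `I, J` are `G`-invariant ideals with `IJ = {0}`, then
`I = {0}` or `J = {0}`. -/
def GPrime : Prop :=
  ∀ I J : Set R, P.IsInvIdeal I → P.IsInvIdeal J →
    (∀ x ∈ I, ∀ y ∈ J, x * y = 0) → I = {0} ∨ J = {0}

/-- `R ⋊_α G` is graded simple. -/
def GradedSimple : Prop :=
  ∀ I : Set (G →₀ R), P.IsGradedIdeal I → I = {0} ∨ I = P.carrier

/-- `R ⋊_α G` is graded prime. -/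
def GradedPrime : Prop :=
  ∀ I J : Set (G →₀ R), P.IsGradedIdeal I → P.IsGradedIdeal J →
    (∀ x ∈ I, ∀ y ∈ J, P.skewMul x y = 0) → I = {0} ∨ J = {0}

/-- `R ⋊_α G` is a prime ring. -/
def SkewPrime : Prop :=
  ∀ I J : Set (G →₀ R), P.IsSkewIdeal I → P.IsSkewIdeal J →
    (∀ x ∈ I, ∀ y ∈ J, P.skewMul x y = 0) → I = {0} ∨ J = {0}

/-- `R ⋊_α G` is a simple ring. -/
def SkewSimple : Prop :=
  ∀ I : Set (G →₀ R), P.IsSkewIdeal I → I = {0} ∨ I = P.carrier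

end PartialAction

/-!
A `G`-invariant ideal `J` of `R` yields the ideal `⊕_g (J ∩ D_g) δ_g` of `R ⋊_α G`; because
each `D_e` is s-unital and `R = ⊕_e D_e`, this ideal is zero (resp. everything) only if `J` is
zero (resp. `R`). This gives (i) and half of (iii). Conversely an ideal `I` of `R ⋊_α G` yields
`I ∩ ⊕_e D_e δ_e`, which is a subring of `R` since `D_e D_f = 0` for distinct units `e ≠ f`.
It is `G`-invariant: using s-units, `x δ_{s g} ∈ I` is moved to `x δ_{g⁻¹}` and then to
`α_g(x) δ_{r g}`. The intersection property says exactly that this ideal is nonzero when `I`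
is, which gives the rest.
-/

namespace DGroupoid

variable {G : Type*} (𝔾 : DGroupoid G)

theorem unit_r (g : G) : 𝔾.unit (𝔾.r g) := 𝔾.r_idem g

theorem unit_s (g : G) : 𝔾.unit (𝔾.s g) := 𝔾.r_of_s g

theorem mul_eq_of_eq_r {e g : G} (he : e = 𝔾.r g) (p : 𝔾.s e = 𝔾.r g) : 𝔾.mul e g p = g := by
  subst he
  exact 𝔾.id_mul g p

variable {𝔾}

theorem unit.eq {e : G} (he : 𝔾.unit e) : 𝔾.r e = e := he

theorem unit.s_eq {e : G} (he : 𝔾.unit e) : 𝔾.s e = e := by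
  simpa only [he.eq] using 𝔾.s_of_r e

theorem unit.inv_eq {e : G} (he : 𝔾.unit e) : 𝔾.inv e = e := by
  have hr : e = 𝔾.r (𝔾.inv e) := by rw [𝔾.r_inv, he.s_eq]
  have p : 𝔾.s e = 𝔾.r (𝔾.inv e) := by rw [← hr, he.s_eq]
  calc 𝔾.inv e = 𝔾.mul e (𝔾.inv e) p := (𝔾.mul_eq_of_eq_r hr p).symm
    _ = e := by rw [𝔾.mul_inv, he.eq]

end DGroupoid

/-- On `⊕_{e ∈ G₀} D_e δ_e` this is the identification with `R = ⊕_{e ∈ G₀} D_e`. -/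
noncomputable def coeffSum {G R : Type*} [AddCommMonoid R] : (G →₀ R) →+ R :=
  Finsupp.liftAddHom fun _ => AddMonoidHom.id R

theorem coeffSum_apply {G R : Type*} [AddCommMonoid R] (a : G →₀ R) :
    coeffSum a = a.sum fun _ v => v := rfl

theorem coeffSum_eq_sum {G R : Type*} [AddCommMonoid R] (a : G →₀ R) :
    coeffSum a = ∑ g ∈ a.support, a g := rfl

theorem coeffSum_single {G R : Type*} [AddCommMonoid R] (g : G) (x : R) :
    coeffSum (Finsupp.single g x) = x :=
  Finsupp.liftAddHom_apply_single _ g x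

namespace PartialAction

variable {G R : Type*} [NonUnitalRing R] {𝔾 : DGroupoid G} (P : PartialAction 𝔾 R)

theorem act_zero (g : G) : P.act g 0 = 0 := by
  have h := P.act_add g 0 (P.zero_mem _) 0 (P.zero_mem _)
  rw [add_zero] at h
  exact left_eq_add.mp h

theorem act_inv_mem {g : G} {x : R} (hx : x ∈ P.D g) : P.act (𝔾.inv g) x ∈ P.D (𝔾.inv g) :=
  P.act_mem _ x (by rwa [𝔾.inv_inv])

theorem act_act_inv {g : G} {x : R} (hx : x ∈ P.D g) : P.act g (P.act (𝔾.inv g) x) = x := by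
  simpa only [𝔾.inv_inv] using P.act_inv (𝔾.inv g) x (by rwa [𝔾.inv_inv])

theorem mem_D_s {g : G} {x : R} (hx : x ∈ P.D (𝔾.inv g)) : x ∈ P.D (𝔾.s g) := by
  simpa only [𝔾.r_inv] using P.subset_r _ hx

theorem mul_mem_D_unit {e : G} (he : 𝔾.unit e) {x : R} (hx : x ∈ P.D e) (y : R) :
    x * y ∈ P.D e ∧ y * x ∈ P.D e := by
  have h := (P.idealR e).2.2.2
  rw [he.eq] at h
  exact h x hx y

theorem act_inv_mul_mem {g h : G} (p : 𝔾.s g = 𝔾.r h) {x y : R} (hx : x ∈ P.D g)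
    (hy : y ∈ P.D h) :
    P.act (𝔾.inv g) x * y ∈ P.D (𝔾.inv g) ∧ P.act (𝔾.inv g) x * y ∈ P.D h := by
  have ha : P.act (𝔾.inv g) x ∈ P.D (𝔾.inv g) := P.act_inv_mem hx
  have hr : 𝔾.r (𝔾.inv g) = 𝔾.r h := by rw [𝔾.r_inv, p]
  constructor
  · exact (P.idealInR _ _ ha y (hr ▸ P.subset_r h hy)).1
  · exact (P.idealInR h y hy _ (hr ▸ P.subset_r _ ha)).2

theorem act_mem_D_mul {g h : G} (p : 𝔾.s g = 𝔾.r h) {z : R} (hzg : z ∈ P.D (𝔾.inv g))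
    (hzh : z ∈ P.D h) : P.act g z ∈ P.D (𝔾.mul g h p) := by
  have hzz : P.act h (P.act (𝔾.inv h) z) = z := P.act_act_inv hzh
  have hcomp := P.act_comp g h p _ (P.act_inv_mem hzh) (by rwa [hzz])
  rw [hzz] at hcomp
  rw [hcomp]
  exact P.act_mem _ _ (P.act_comp_mem g h p z hzg hzh)

theorem single_mem_carrier {g : G} {x : R} (hx : x ∈ P.D g) :
    Finsupp.single g x ∈ P.carrier := by
  intro k
  rw [Finsupp.single_apply]
  split_ifs with hgk
  · exact hgk ▸ hx
  · exact P.zero_mem k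

theorem skewMul_single (g h : G) (x y : R) :
    P.skewMul (Finsupp.single g x) (Finsupp.single h y) =
      if p : 𝔾.s g = 𝔾.r h then
        Finsupp.single (𝔾.mul g h p) (P.act g (P.act (𝔾.inv g) x * y)) else 0 := by
  by_cases hx : x = 0
  · subst hx
    simp [skewMul, P.act_zero]
  by_cases hy : y = 0
  · subst hy
    simp [skewMul, P.act_zero]
  simp only [skewMul, Finsupp.support_single _ hx, Finsupp.support_single _ hy,
    Finset.sum_singleton, Finsupp.single_eq_same]

theorem skewMul_eq_sum (a b : G →₀ R) :
    P.skewMul a b = ∑ g ∈ a.support, ∑ h ∈ b.support,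
      P.skewMul (Finsupp.single g (a g)) (Finsupp.single h (b h)) := by
  simp only [P.skewMul_single]
  rfl

theorem single_mem_diag {e : G} (he : 𝔾.unit e) {x : R} (hx : x ∈ P.D e) :
    Finsupp.single e x ∈ P.diag :=
  ⟨P.single_mem_carrier hx, fun _ hg =>
    Finset.mem_singleton.mp (Finsupp.support_single_subset hg) ▸ he⟩

theorem zero_mem_diag : (0 : G →₀ R) ∈ P.diag :=
  ⟨fun g => P.zero_mem g, fun _ hg => absurd hg (Finsupp.notMem_support_iff.mpr rfl)⟩

theorem add_mem_diag {a b : G →₀ R} (ha : a ∈ P.diag) (hb : b ∈ P.diag) : a + b ∈ P.diag := by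
  refine ⟨fun g => P.add_mem g _ (ha.1 g) _ (hb.1 g), fun g hg => ?_⟩
  rcases Finset.mem_union.mp (Finsupp.support_add hg) with h | h
  · exact ha.2 g h
  · exact hb.2 g h

theorem neg_mem_diag {a : G →₀ R} (ha : a ∈ P.diag) : -a ∈ P.diag :=
  ⟨fun g => P.neg_mem g _ (ha.1 g), fun g hg => ha.2 g (Finsupp.support_neg a ▸ hg)⟩

theorem sub_mem_diag {a b : G →₀ R} (ha : a ∈ P.diag) (hb : b ∈ P.diag) : a - b ∈ P.diag :=
  sub_eq_add_neg a b ▸ P.add_mem_diag ha (P.neg_mem_diag hb)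

theorem skewMul_single_unit {e f : G} (he : 𝔾.unit e) (hf : 𝔾.unit f) {x : R} (hx : x ∈ P.D e)
    (y : R) :
    P.skewMul (Finsupp.single e x) (Finsupp.single f y) =
      if e = f then Finsupp.single e (x * y) else 0 := by
  rw [P.skewMul_single]
  by_cases hef : e = f
  · subst hef
    have p : 𝔾.s e = 𝔾.r e := by rw [he.s_eq, he.eq]
    rw [dif_pos p, if_pos rfl, 𝔾.mul_eq_of_eq_r he.eq.symm p, he.inv_eq, P.act_unit e he x hx,
      P.act_unit e he _ (P.mul_mem_D_unit he hx y).1]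
  · rw [if_neg hef, dif_neg]
    intro p
    exact hef (by rw [← he.s_eq, p, hf.eq])

theorem skewMul_of_mem_diag {a b : G →₀ R} (ha : a ∈ P.diag) (hb : b ∈ P.diag) :
    P.skewMul a b = ∑ e ∈ a.support, Finsupp.single e (a e * b e) := by
  rw [P.skewMul_eq_sum]
  refine Finset.sum_congr rfl fun e hea => ?_
  have he := ha.2 e hea
  rw [Finset.sum_eq_single e (fun f hf hfe => ?_) (fun hne => ?_)]
  · rw [P.skewMul_single_unit he he (ha.1 e), if_pos rfl]
  · rw [P.skewMul_single_unit he (hb.2 f hf) (ha.1 e), if_neg (Ne.symm hfe)]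
  · rw [P.skewMul_single_unit he he (ha.1 e), if_pos rfl, Finsupp.notMem_support_iff.mp hne,
      mul_zero, Finsupp.single_zero]

theorem skewMul_mem_diag {a b : G →₀ R} (ha : a ∈ P.diag) (hb : b ∈ P.diag) :
    P.skewMul a b ∈ P.diag := by
  rw [P.skewMul_of_mem_diag ha hb]
  exact Finset.sum_induction _ (· ∈ P.diag) (fun _ _ => P.add_mem_diag) P.zero_mem_diag
    fun e he => P.single_mem_diag (ha.2 e he) (P.mul_mem_D_unit (ha.2 e he) (ha.1 e) _).1

theorem exists_mem_diag_coeffSum_eq (hds : P.directSum) (x : R) :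
    ∃ a ∈ P.diag, coeffSum a = x := by
  obtain ⟨a, hunit, hD, hsum⟩ := hds.1 x
  exact ⟨a, ⟨hD, hunit⟩, (coeffSum_apply a).trans hsum⟩

theorem eq_zero_of_mem_diag (hds : P.directSum) {a : G →₀ R} (ha : a ∈ P.diag)
    (h : coeffSum a = 0) : a = 0 :=
  hds.2 a ha.2 ha.1 ((coeffSum_apply a).symm.trans h)

theorem eq_single_of_coeffSum_eq (hds : P.directSum) {e : G} (he : 𝔾.unit e) {x : R}
    (hx : x ∈ P.D e) {a : G →₀ R} (ha : a ∈ P.diag) (h : coeffSum a = x) :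
    a = Finsupp.single e x :=
  sub_eq_zero.mp <| P.eq_zero_of_mem_diag hds (P.sub_mem_diag ha (P.single_mem_diag he hx))
    (by rw [map_sub, h, coeffSum_single, sub_self])

theorem mul_eq_zero_of_unit_ne (hds : P.directSum) {e f : G} (he : 𝔾.unit e) (hf : 𝔾.unit f)
    (hef : e ≠ f) {x y : R} (hx : x ∈ P.D e) (hy : y ∈ P.D f) : x * y = 0 := by
  have h := P.eq_single_of_coeffSum_eq hds he (P.mul_mem_D_unit he hx y).1
    (P.single_mem_diag hf (P.mul_mem_D_unit hf hy x).2) (coeffSum_single _ _)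
  simpa [Finsupp.single_eq_of_ne' hef] using congrArg (· f) h

theorem coeffSum_skewMul (hds : P.directSum) {a b : G →₀ R} (ha : a ∈ P.diag)
    (hb : b ∈ P.diag) : coeffSum (P.skewMul a b) = coeffSum a * coeffSum b := by
  rw [P.skewMul_of_mem_diag ha hb, map_sum, coeffSum_eq_sum a, coeffSum_eq_sum b,
    Finset.sum_mul_sum]
  refine Finset.sum_congr rfl fun e he => ?_
  rw [coeffSum_single, Finset.sum_eq_single e (fun f hf hfe => ?_) fun hne => ?_]
  · exact P.mul_eq_zero_of_unit_ne hds (ha.2 e he) (hb.2 f hf) (Ne.symm hfe) (ha.1 e) (hb.1 f)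
  · rw [Finsupp.notMem_support_iff.mp hne, mul_zero]

theorem coeffSum_mul_of_mem_D (hds : P.directSum) {a : G →₀ R} (ha : a ∈ P.diag) {e : G}
    (he : e ∈ a.support) {u : R} (hu : u ∈ P.D e) : coeffSum a * u = a e * u := by
  rw [coeffSum_eq_sum, Finset.sum_mul, Finset.sum_eq_single_of_mem e he fun f hf hfe => ?_]
  exact P.mul_eq_zero_of_unit_ne hds (ha.2 f hf) (ha.2 e he) hfe (ha.1 f) hu

theorem single_mem_skewOf {J : Set R} (hJ0 : (0 : R) ∈ J) {g : G} {x : R} (hxD : x ∈ P.D g)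
    (hxJ : x ∈ J) : Finsupp.single g x ∈ P.skewOf J := by
  intro k
  rw [Finsupp.single_apply]
  split_ifs with hgk
  · exact hgk ▸ ⟨hxD, hxJ⟩
  · exact ⟨P.zero_mem k, hJ0⟩

theorem skewMul_single_mem_skewOf {J : Set R} (hJ : P.IsInvIdeal J) {g h : G} {x y : R}
    (hx : x ∈ P.D g) (hy : y ∈ P.D h) (hxy : x ∈ J ∨ y ∈ J) :
    P.skewMul (Finsupp.single g x) (Finsupp.single h y) ∈ P.skewOf J := by
  rw [P.skewMul_single]
  split_ifs with p
  · obtain ⟨hzg, hzh⟩ := P.act_inv_mul_mem p hx hy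
    have hzJ : P.act (𝔾.inv g) x * y ∈ J := by
      rcases hxy with hxJ | hyJ
      · exact (hJ.1.2.2.2 _ (hJ.2 _ x ⟨by rwa [𝔾.inv_inv], hxJ⟩) y).1
      · exact (hJ.1.2.2.2 y hyJ _).2
    exact P.single_mem_skewOf hJ.1.1 (P.act_mem_D_mul p hzg hzh) (hJ.2 g _ ⟨hzg, hzJ⟩)
  · exact fun k => ⟨P.zero_mem k, hJ.1.1⟩

theorem isSkewIdeal_skewOf {J : Set R} (hJ : P.IsInvIdeal J) : P.IsSkewIdeal (P.skewOf J) := by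
  have h0 : (0 : G →₀ R) ∈ P.skewOf J := fun g => ⟨P.zero_mem g, hJ.1.1⟩
  have hadd (a b : G →₀ R) (ha : a ∈ P.skewOf J) (hb : b ∈ P.skewOf J) : a + b ∈ P.skewOf J :=
    fun g => ⟨P.add_mem g _ (ha g).1 _ (hb g).1, hJ.1.2.1 _ (ha g).2 _ (hb g).2⟩
  have hmul (a b : G →₀ R) (hab : ∀ g ∈ a.support, ∀ h ∈ b.support,
      P.skewMul (Finsupp.single g (a g)) (Finsupp.single h (b h)) ∈ P.skewOf J) :
      P.skewMul a b ∈ P.skewOf J := by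
    rw [P.skewMul_eq_sum]
    exact Finset.sum_induction _ _ hadd h0 fun g hg => Finset.sum_induction _ _ hadd h0 (hab g hg)
  refine ⟨fun a ha g => (ha g).1, h0, fun a ha b hb => hadd a b ha hb,
    fun a ha g => ⟨P.neg_mem g _ (ha g).1, hJ.1.2.2.1 _ (ha g).2⟩,
    fun a ha b hb => ⟨hmul a b ?_, hmul b a ?_⟩⟩
  · exact fun g _ h _ => P.skewMul_single_mem_skewOf hJ (ha g).1 (hb h) (Or.inl (ha g).2)
  · exact fun g _ h _ => P.skewMul_single_mem_skewOf hJ (hb g) (ha h).1 (Or.inr (ha h).2)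

theorem skewMul_eq_zero_of_mem_skewOf {I J : Set R} (hI : P.IsInvIdeal I)
    (hIJ : ∀ x ∈ I, ∀ y ∈ J, x * y = 0) {a b : G →₀ R} (ha : a ∈ P.skewOf I)
    (hb : b ∈ P.skewOf J) : P.skewMul a b = 0 := by
  rw [P.skewMul_eq_sum]
  refine Finset.sum_eq_zero fun g _ => Finset.sum_eq_zero fun h _ => ?_
  rw [P.skewMul_single]
  split_ifs
  · have hact : P.act (𝔾.inv g) (a g) ∈ I := hI.2 _ _ ⟨by rw [𝔾.inv_inv]; exact (ha g).1, (ha g).2⟩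
    rw [hIJ _ hact _ (hb h).2, P.act_zero, Finsupp.single_zero]
  · rfl

theorem eq_zero_of_skewOf_eq_zero (hsu : ∀ g, IsSUnitalSet (P.D g)) (hds : P.directSum)
    {J : Set R} (hJ : IsRingIdeal J) (h : P.skewOf J = {0}) : J = {0} := by
  refine Set.eq_singleton_iff_unique_mem.mpr ⟨hJ.1, fun x hxJ => ?_⟩
  obtain ⟨a, ha, rfl⟩ := P.exists_mem_diag_coeffSum_eq hds x
  suffices a = 0 by rw [this, map_zero]
  refine Finsupp.support_eq_empty.mp (Finset.eq_empty_of_forall_notMem fun e he => ?_)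
  obtain ⟨⟨u, hu, hau⟩, -⟩ := hsu e (a e) (ha.1 e)
  have haeJ : a e ∈ J := by
    rw [← hau, ← P.coeffSum_mul_of_mem_D hds ha he hu]
    exact (hJ.2.2.2 _ hxJ u).1
  have hsingle := h ▸ P.single_mem_skewOf hJ.1 (ha.1 e) haeJ
  exact Finsupp.mem_support_iff.mp he
    (by simpa using congrArg (· e) (Set.mem_singleton_iff.mp hsingle))

theorem eq_univ_of_skewOf_eq_carrier (hds : P.directSum) {J : Set R} (hJ : IsRingIdeal J)
    (h : P.skewOf J = P.carrier) : J = Set.univ := by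
  refine Set.eq_univ_iff_forall.mpr fun x => ?_
  obtain ⟨a, ha, rfl⟩ := P.exists_mem_diag_coeffSum_eq hds x
  rw [coeffSum_eq_sum]
  refine Finset.sum_induction _ (· ∈ J) (fun x y hx hy => hJ.2.1 x hx y hy) hJ.1 fun e _ => ?_
  have he : Finsupp.single e (a e) ∈ P.skewOf J := h ▸ P.single_mem_carrier (ha.1 e)
  simpa using (he e).2

def baseIdeal (I : Set (G →₀ R)) : Set R := coeffSum '' (I ∩ P.diag)

theorem single_mem_of_mem_baseIdeal (hds : P.directSum) {I : Set (G →₀ R)} {e : G}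
    (he : 𝔾.unit e) {x : R} (hx : x ∈ P.D e) (hxI : x ∈ P.baseIdeal I) :
    Finsupp.single e x ∈ I := by
  obtain ⟨a, ⟨haI, had⟩, rfl⟩ := hxI
  rwa [← P.eq_single_of_coeffSum_eq hds he hx had rfl]

theorem isRingIdeal_baseIdeal (hds : P.directSum) {I : Set (G →₀ R)} (hI : P.IsSkewIdeal I) :
    IsRingIdeal (P.baseIdeal I) := by
  obtain ⟨-, hI0, hIadd, hIneg, hImul⟩ := hI
  refine ⟨⟨0, ⟨hI0, P.zero_mem_diag⟩, map_zero _⟩, ?_, ?_, ?_⟩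
  · rintro _ ⟨a, ⟨haI, had⟩, rfl⟩ _ ⟨b, ⟨hbI, hbd⟩, rfl⟩
    exact ⟨a + b, ⟨hIadd a haI b hbI, P.add_mem_diag had hbd⟩, map_add _ _ _⟩
  · rintro _ ⟨a, ⟨haI, had⟩, rfl⟩
    exact ⟨-a, ⟨hIneg a haI, P.neg_mem_diag had⟩, map_neg _ _⟩
  · rintro _ ⟨a, ⟨haI, had⟩, rfl⟩ y
    obtain ⟨b, hbd, rfl⟩ := P.exists_mem_diag_coeffSum_eq hds y
    have hab := hImul a haI b hbd.1
    exact ⟨⟨_, ⟨hab.1, P.skewMul_mem_diag had hbd⟩, P.coeffSum_skewMul hds had hbd⟩,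
      ⟨_, ⟨hab.2, P.skewMul_mem_diag hbd had⟩, P.coeffSum_skewMul hds hbd had⟩⟩

theorem single_r_act_mem (hsu : ∀ g, IsSUnitalSet (P.D g)) {I : Set (G →₀ R)}
    (hI : P.IsSkewIdeal I) {g : G} {x : R} (hx : x ∈ P.D (𝔾.inv g))
    (hxI : Finsupp.single (𝔾.s g) x ∈ I) : Finsupp.single (𝔾.r g) (P.act g x) ∈ I := by
  obtain ⟨⟨u, hu, hxu⟩, v, hv, hvx⟩ := hsu _ x hx
  have hmove : P.skewMul (Finsupp.single (𝔾.s g) x) (Finsupp.single (𝔾.inv g) u) =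
      Finsupp.single (𝔾.inv g) x := by
    have p : 𝔾.s (𝔾.s g) = 𝔾.r (𝔾.inv g) := by rw [𝔾.s_idem, 𝔾.r_inv]
    rw [P.skewMul_single, dif_pos p, 𝔾.mul_eq_of_eq_r (𝔾.r_inv g).symm p, (𝔾.unit_s g).inv_eq,
      P.act_unit _ (𝔾.unit_s g) x (P.mem_D_s hx), hxu, P.act_unit _ (𝔾.unit_s g) x (P.mem_D_s hx)]
  have hact : P.skewMul (Finsupp.single g (P.act g v)) (Finsupp.single (𝔾.inv g) x) =
      Finsupp.single (𝔾.r g) (P.act g x) := by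
    have p : 𝔾.s g = 𝔾.r (𝔾.inv g) := (𝔾.r_inv g).symm
    rw [P.skewMul_single, dif_pos p, 𝔾.mul_inv g p, P.act_inv g v hv, hvx]
  have hinv : Finsupp.single (𝔾.inv g) x ∈ I :=
    hmove ▸ (hI.2.2.2.2 _ hxI _ (P.single_mem_carrier hu)).1
  exact hact ▸ (hI.2.2.2.2 _ hinv _ (P.single_mem_carrier (P.act_mem g v hv))).2

theorem isInvIdeal_baseIdeal (hsu : ∀ g, IsSUnitalSet (P.D g)) (hds : P.directSum)
    {I : Set (G →₀ R)} (hI : P.IsSkewIdeal I) : P.IsInvIdeal (P.baseIdeal I) := by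
  refine ⟨P.isRingIdeal_baseIdeal hds hI, fun g x hx => ?_⟩
  obtain ⟨hxD, hxI⟩ := hx
  have hs := P.single_mem_of_mem_baseIdeal hds (𝔾.unit_s g) (P.mem_D_s hxD) hxI
  exact ⟨_, ⟨P.single_r_act_mem hsu hI hxD hs,
    P.single_mem_diag (𝔾.unit_r g) (P.subset_r g (P.act_mem g x hxD))⟩, coeffSum_single _ _⟩

theorem baseIdeal_ne_zero (hds : P.directSum) (hip : P.HasIntersectionProperty)
    {I : Set (G →₀ R)} (hI : P.IsSkewIdeal I) (hne : I ≠ {0}) : P.baseIdeal I ≠ {0} := by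
  have h0 : (0 : G →₀ R) ∈ I ∩ P.diag := ⟨hI.2.1, P.zero_mem_diag⟩
  obtain ⟨a, ⟨haI, had⟩, ha0⟩ :=
    ((Set.nontrivial_iff_ne_singleton h0).mpr (hip I hI hne)).exists_ne 0
  intro h
  have ha : coeffSum a ∈ P.baseIdeal I := ⟨a, ⟨haI, had⟩, rfl⟩
  rw [h] at ha
  exact ha0 (P.eq_zero_of_mem_diag hds had ha)

theorem baseIdeal_mul_eq_zero (hds : P.directSum) {I J : Set (G →₀ R)}
    (hIJ : ∀ a ∈ I, ∀ b ∈ J, P.skewMul a b = 0) :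
    ∀ x ∈ P.baseIdeal I, ∀ y ∈ P.baseIdeal J, x * y = 0 := by
  rintro _ ⟨a, ⟨haI, had⟩, rfl⟩ _ ⟨b, ⟨hbJ, hbd⟩, rfl⟩
  rw [← P.coeffSum_skewMul hds had hbd, hIJ a haI b hbJ, map_zero]

theorem eq_carrier_of_baseIdeal_eq_univ (hsu : ∀ g, IsSUnitalSet (P.D g)) (hds : P.directSum)
    {I : Set (G →₀ R)} (hI : P.IsSkewIdeal I) (h : P.baseIdeal I = Set.univ) :
    I = P.carrier := by
  refine hI.1.antisymm fun b hb => ?_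
  rw [← Finsupp.sum_single b]
  refine Finset.sum_induction _ (· ∈ I) (fun a b ha hb => hI.2.2.1 a ha b hb) hI.2.1 fun g _ => ?_
  obtain ⟨-, v, hv, hvb⟩ := hsu g (b g) (hb g)
  have hvr : v ∈ P.D (𝔾.r g) := P.subset_r g hv
  have hvI := P.single_mem_of_mem_baseIdeal hds (𝔾.unit_r g) hvr (h ▸ Set.mem_univ v)
  have hmul : P.skewMul (Finsupp.single (𝔾.r g) v) (Finsupp.single g (b g)) =
      Finsupp.single g (b g) := by
    have p : 𝔾.s (𝔾.r g) = 𝔾.r g := 𝔾.s_of_r g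
    rw [P.skewMul_single, dif_pos p, 𝔾.id_mul g p, (𝔾.unit_r g).inv_eq,
      P.act_unit _ (𝔾.unit_r g) v hvr, hvb, P.act_unit _ (𝔾.unit_r g) _ (P.subset_r g (hb g))]
  exact hmul ▸ (hI.2.2.2.2 _ hvI _ (P.single_mem_carrier (hb g))).1

theorem gPrime_of_skewPrime (hsu : ∀ g, IsSUnitalSet (P.D g)) (hds : P.directSum)
    (h : P.SkewPrime) : P.GPrime := fun _ _ hI hJ hIJ =>
  (h _ _ (P.isSkewIdeal_skewOf hI) (P.isSkewIdeal_skewOf hJ)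
    fun _ ha _ hb => P.skewMul_eq_zero_of_mem_skewOf hI hIJ ha hb).imp
    (P.eq_zero_of_skewOf_eq_zero hsu hds hI.1) (P.eq_zero_of_skewOf_eq_zero hsu hds hJ.1)

theorem skewPrime_of_gPrime (hsu : ∀ g, IsSUnitalSet (P.D g)) (hds : P.directSum)
    (hip : P.HasIntersectionProperty) (h : P.GPrime) : P.SkewPrime := by
  intro I J hI hJ hIJ
  by_contra! hne
  rcases h _ _ (P.isInvIdeal_baseIdeal hsu hds hI) (P.isInvIdeal_baseIdeal hsu hds hJ)
    (P.baseIdeal_mul_eq_zero hds hIJ) with h | h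
  · exact P.baseIdeal_ne_zero hds hip hI hne.1 h
  · exact P.baseIdeal_ne_zero hds hip hJ hne.2 h

theorem gSimple_of_skewSimple (hsu : ∀ g, IsSUnitalSet (P.D g)) (hds : P.directSum)
    (h : P.SkewSimple) : P.GSimple := fun _ hJ =>
  (h _ (P.isSkewIdeal_skewOf hJ)).imp (P.eq_zero_of_skewOf_eq_zero hsu hds hJ.1)
    (P.eq_univ_of_skewOf_eq_carrier hds hJ.1)

theorem hasIntersectionProperty_of_skewSimple (h : P.SkewSimple) :
    P.HasIntersectionProperty := by
  intro I hI hne hdiag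
  obtain ⟨b, hbI, hb0⟩ := ((Set.nontrivial_iff_ne_singleton hI.2.1).mpr hne).exists_ne 0
  obtain ⟨g, hg⟩ := Finsupp.support_nonempty_iff.mpr hb0
  have hbr : b g ∈ P.D (𝔾.r g) := P.subset_r g (hI.1 hbI g)
  have hmem : Finsupp.single (𝔾.r g) (b g) ∈ I ∩ P.diag :=
    ⟨(h I hI).resolve_left hne ▸ P.single_mem_carrier hbr, P.single_mem_diag (𝔾.unit_r g) hbr⟩
  rw [hdiag] at hmem
  exact Finsupp.mem_support_iff.mp hg
    (by simpa using congrArg (· (𝔾.r g)) (Set.mem_singleton_iff.mp hmem))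

theorem skewSimple_of_gSimple (hsu : ∀ g, IsSUnitalSet (P.D g)) (hds : P.directSum)
    (hgs : P.GSimple) (hip : P.HasIntersectionProperty) : P.SkewSimple := fun _ hI =>
  or_iff_not_imp_left.mpr fun hne => P.eq_carrier_of_baseIdeal_eq_univ hsu hds hI <|
    (hgs _ (P.isInvIdeal_baseIdeal hsu hds hI)).resolve_left (P.baseIdeal_ne_zero hds hip hI hne)

end PartialAction

/-- **Statement 13.** (i) If `R ⋊_α G` is prime, then `R` is `G`-prime.
(ii) If `α` has the intersection property, then `R` is `G`-prime iff `R ⋊_α G` is prime.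
(iii) `R` is `G`-simple and `α` has the intersection property iff `R ⋊_α G` is simple. -/
theorem prime_simple_characterizations {G R : Type*} [NonUnitalRing R]
    (𝔾 : DGroupoid G) (P : PartialAction 𝔾 R)
    (hsu : ∀ g, IsSUnitalSet (P.D g)) (hds : P.directSum) :
    (P.SkewPrime → P.GPrime) ∧
    (P.HasIntersectionProperty → (P.GPrime ↔ P.SkewPrime)) ∧
    ((P.GSimple ∧ P.HasIntersectionProperty) ↔ P.SkewSimple) :=
  ⟨P.gPrime_of_skewPrime hsu hds,
    fun hip => ⟨P.skewPrime_of_gPrime hsu hds hip, P.gPrime_of_skewPrime hsu hds⟩,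
    fun ⟨hgs, hip⟩ => P.skewSimple_of_gSimple hsu hds hgs hip,
    fun h => ⟨P.gSimple_of_skewSimple hsu hds h, P.hasIntersectionProperty_of_skewSimple h⟩⟩
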